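/- Let Λ be countable, (κ_λ)_λ ∈ (0,∞)^Λ with sup_λ κ_λ < ∞, and let (φ_α)_{α>0} be a non-linear regularizing filter satisfying Assumption C with parameter γ and contraction factors ℓ_α ∈ (0,1). Then: (Existence) for every α > 0 and every z ∈ ℓ²(Λ), the family (φ_α(κ_λ, z_λ)/κ_λ)_λ belongs to ℓ²(Λ); (Stability) for fixed α > 0, if z^k → z in ℓ²(Λ), then (φ_α(κ_λ, z^k_λ)/κ_λ)_λ → (φ_α(κ_λ, z_λ)/κ_λ)_λ in norm; (Convergence) if z = (κ_λ c⁺_λ)_λ for some c⁺ ∈ ℓ²(Λ), for every α > 0 there exists w ∈ ℓ²(Λ) with φ_α(κ_λ, w_λ) = z_λ for all λ, ‖z^k − z‖ ≤ δ_k with δ_k → 0, α_k → 0, and there is c > 0 with (1 − ℓ_{α_k})/ℓ_{α_k} ≥ c·δ_k for all k, then (φ_{α_k}(κ_λ, z^k_λ)/κ_λ)_λ converges weakly to c⁺ in ℓ²(Λ). -/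

import Mathlib

/-!
Assumption (C1) bounds the Lipschitz constant of `φ_α(κ, ·)` by `κ · M_α`, where
`M_α = γ K ℓ_α / (1 - ℓ_α)` and `K` bounds all `κ_λ`. Hence `z ↦ (φ_α(κ_λ, z_λ) / κ_λ)_λ` is an
`M_α`-Lipschitz map of `ℓ²(Λ)` fixing `0`, which gives existence and stability. For convergence,
the parameter choice gives `M_{α_k} δ_k ≤ γ K / c`, so the reconstructions from noisy data stay
within `γ K / c` of those from exact data, whose norms are at most `‖c⁺‖` by nonexpansiveness.
By (F2) and (F4) they converge coordinatewise to `c⁺`, and a bounded sequence in `ℓ²` that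
converges coordinatewise converges weakly.
-/

open scoped ENNReal RealInnerProductSpace
open Filter

noncomputable section

/-- A non-linear regularizing filter: `φ α κ` is (F1) monotone, (F2) nonexpansive,
(F3) zero at zero, and (F4) converges pointwise to the identity as `α → 0`. -/
def IsRegFilter (φ : ℝ → ℝ → ℝ → ℝ) : Prop :=
  (∀ α > (0 : ℝ), ∀ κ > (0 : ℝ), Monotone (φ α κ)) ∧
  (∀ α > (0 : ℝ), ∀ κ > (0 : ℝ), ∀ x y : ℝ, |φ α κ x - φ α κ y| ≤ |x - y|) ∧
  (∀ α > (0 : ℝ), ∀ κ > (0 : ℝ), φ α κ 0 = 0) ∧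
  (∀ κ > (0 : ℝ), ∀ c : ℝ,
    Tendsto (fun α => φ α κ c) (nhdsWithin 0 (Set.Ioi 0)) (nhds c))

/-- Assumption B: (B1) `α ↦ |φ_α(κ,x)|` increases as `α` decreases, and (B2) there are
`d, e > 0` with `|φ_α(κ,x)| ≤ (eκ/√α)·|x|` whenever `|x| ≤ dα/κ`. -/
def AssumptionB (φ : ℝ → ℝ → ℝ → ℝ) : Prop :=
  (∀ κ > (0 : ℝ), ∀ x : ℝ, ∀ α β : ℝ, 0 < α → α ≤ β → |φ β κ x| ≤ |φ α κ x|) ∧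
  (∃ d > (0 : ℝ), ∃ e > (0 : ℝ), ∀ κ > (0 : ℝ), ∀ α > (0 : ℝ), ∀ x : ℝ,
    |x| ≤ d * α / κ → |φ α κ x| ≤ e * κ / Real.sqrt α * |x|)

open scoped Topology

namespace lp

variable {ι : Type*}

theorem tendsto_inner_of_norm_le_of_tendsto_apply {𝕜 : Type*} [RCLike 𝕜] {G : ι → Type*}
    [∀ i, NormedAddCommGroup (G i)] [∀ i, InnerProductSpace 𝕜 (G i)] {β : Type*}
    {l : Filter β} {X : β → lp G 2} {x : lp G 2} {C : ℝ} (hC : ∀ k, ‖X k‖ ≤ C)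
    (hX : ∀ i, Tendsto (fun k => X k i) l (𝓝 (x i))) (w : lp G 2) :
    Tendsto (fun k => inner 𝕜 (X k) w) l (𝓝 (inner 𝕜 x w)) := by
  classical
  have hequi : Equicontinuous fun k (v : lp G 2) => inner 𝕜 (X k) v := by
    have hTFAE := (NormedSpace.equicontinuous_TFAE fun k => innerSL 𝕜 (X k)).out 5 1
    exact hTFAE.1 ⟨C, fun k => (innerSL_apply_norm 𝕜 (X k)).trans_le (hC k)⟩
  have hclosed : IsClosed {v : lp G 2 | Tendsto (fun k => inner 𝕜 (X k) v) l (𝓝 (inner 𝕜 x v))} :=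
    hequi.isClosed_setOfPred_tendsto (continuous_const.inner continuous_id)
  refine hclosed.mem_of_tendsto (lp.hasSum_single ENNReal.ofNat_ne_top w)
    (Eventually.of_forall fun s => ?_)
  simp only [Set.mem_ofPred_eq, inner_sum, lp.inner_single_right]
  exact tendsto_finsetSum s fun i _ => (hX i).inner tendsto_const_nhds

theorem norm_le_mul_norm_of_forall_norm_apply_le {E F : ι → Type*}
    [∀ i, NormedAddCommGroup (E i)] [∀ i, NormedAddCommGroup (F i)] [∀ i, NormedSpace ℝ (E i)]
    {p : ℝ≥0∞} (hp : p ≠ 0) {x : lp F p} {u : lp E p} {L : ℝ} (hL : 0 ≤ L)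
    (h : ∀ i, ‖x i‖ ≤ L * ‖u i‖) : ‖x‖ ≤ L * ‖u‖ :=
  calc ‖x‖ ≤ ‖L • u‖ := lp.norm_mono hp fun i => by
        simpa [lp.coeFn_smul, norm_smul, abs_of_nonneg hL] using h i
    _ = L * ‖u‖ := by rw [lp.norm_const_smul hp, Real.norm_of_nonneg hL]

end lp

namespace IsRegFilter

variable {φ : ℝ → ℝ → ℝ → ℝ}

theorem abs_apply_le (hφ : IsRegFilter φ) {α κ : ℝ} (hα : 0 < α) (hκ : 0 < κ) (x : ℝ) :
    |φ α κ x| ≤ |x| := by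
  simpa [hφ.2.2.1 α hα κ hκ] using hφ.2.1 α hα κ hκ x 0

theorem tendsto_apply (hφ : IsRegFilter φ) {β : Type*} {l : Filter β} {αs xs : β → ℝ}
    {κ x : ℝ} (hκ : 0 < κ) (hα : Tendsto αs l (𝓝[>] 0)) (hx : Tendsto xs l (𝓝 x)) :
    Tendsto (fun k => φ (αs k) κ (xs k)) l (𝓝 x) := by
  have hclose : Tendsto (fun k => φ (αs k) κ (xs k) - φ (αs k) κ x) l (𝓝 0) := by
    refine squeeze_zero_norm' ((hα.eventually self_mem_nhdsWithin).mono fun k hk => ?_)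
      (by simpa using (tendsto_sub_nhds_zero_iff.2 hx).abs)
    exact hφ.2.1 _ hk κ hκ _ _
  simpa using hclose.add ((hφ.2.2.2 κ hκ x).comp hα)

end IsRegFilter

theorem abs_sub_le_of_assumptionC1 {f : ℝ → ℝ} {γ ℓ κ K : ℝ} (hγ : 0 ≤ γ) (hℓ0 : 0 ≤ ℓ)
    (hℓ1 : ℓ < 1) (hκ : 0 ≤ κ) (hκK : κ ≤ K)
    (hf : ∀ x y, |f x - f y| ≤ γ * κ ^ 2 * ℓ / (1 - ℓ * (1 - γ * κ ^ 2)) * |x - y|) (x y : ℝ) :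
    |f x - f y| ≤ κ * (γ * K * ℓ / (1 - ℓ) * |x - y|) := by
  have hden : 1 - ℓ ≤ 1 - ℓ * (1 - γ * κ ^ 2) := by
    nlinarith [mul_nonneg hℓ0 (mul_nonneg hγ (sq_nonneg κ))]
  have hconst : γ * κ ^ 2 * ℓ / (1 - ℓ * (1 - γ * κ ^ 2)) ≤ κ * (γ * K * ℓ / (1 - ℓ)) :=
    calc γ * κ ^ 2 * ℓ / (1 - ℓ * (1 - γ * κ ^ 2)) ≤ γ * κ ^ 2 * ℓ / (1 - ℓ) :=
          div_le_div_of_nonneg_left (by positivity) (by linarith) hden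
      _ ≤ κ * (γ * K * ℓ) / (1 - ℓ) := by
          gcongr ?_ / _
          nlinarith [mul_le_mul_of_nonneg_left hκK (mul_nonneg (mul_nonneg hγ hκ) hℓ0)]
      _ = κ * (γ * K * ℓ / (1 - ℓ)) := mul_div_assoc _ _ _
  rw [← mul_assoc]
  exact (hf x y).trans (by gcongr)

theorem div_one_sub_mul_le_inv {ℓ δ c : ℝ} (hℓ0 : 0 < ℓ) (hℓ1 : ℓ < 1) (hc : 0 < c)
    (h : c * δ ≤ (1 - ℓ) / ℓ) : ℓ / (1 - ℓ) * δ ≤ c⁻¹ := by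
  rw [le_div_iff₀ hℓ0] at h
  rw [div_mul_eq_mul_div, div_le_iff₀ (sub_pos.2 hℓ1), ← div_eq_inv_mul, le_div_iff₀ hc]
  linarith

section Reconstruction

variable {Λ : Type*} {φ : ℝ → ℝ → ℝ → ℝ} {κ : Λ → ℝ} {α L : ℝ} {p : ℝ≥0∞}

def filterReconstruction (φ : ℝ → ℝ → ℝ → ℝ) (κ : Λ → ℝ) (α : ℝ) (z : Λ → ℝ) : Λ → ℝ :=
  fun l => φ α (κ l) (z l) / κ l

theorem abs_filterReconstruction_sub_le (hκ : ∀ l, 0 < κ l)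
    (hlip : ∀ l x y, |φ α (κ l) x - φ α (κ l) y| ≤ κ l * (L * |x - y|)) (u v : Λ → ℝ) (l : Λ) :
    |filterReconstruction φ κ α u l - filterReconstruction φ κ α v l| ≤ L * |u l - v l| := by
  rw [filterReconstruction, filterReconstruction, div_sub_div_same, abs_div, abs_of_pos (hκ l),
    div_le_iff₀' (hκ l)]
  exact hlip l _ _

theorem memℓp_filterReconstruction (hκ : ∀ l, 0 < κ l) (h0 : ∀ l, φ α (κ l) 0 = 0)
    (hlip : ∀ l x y, |φ α (κ l) x - φ α (κ l) y| ≤ κ l * (L * |x - y|)) {z : Λ → ℝ}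
    (hz : Memℓp z p) : Memℓp (filterReconstruction φ κ α z) p :=
  (hz.norm.const_mul L).mono fun l => by
    have hzero : filterReconstruction φ κ α 0 l = 0 := by simp [filterReconstruction, h0]
    simpa only [hzero, Pi.zero_apply, sub_zero, Real.norm_eq_abs] using
      abs_filterReconstruction_sub_le hκ hlip z 0 l

theorem norm_filterReconstruction_sub_le (hp : p ≠ 0) (hκ : ∀ l, 0 < κ l)
    (hlip : ∀ l x y, |φ α (κ l) x - φ α (κ l) y| ≤ κ l * (L * |x - y|)) (hL : 0 ≤ L)
    (u v : lp (fun _ : Λ => ℝ) p) (hu : Memℓp (filterReconstruction φ κ α u) p)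
    (hv : Memℓp (filterReconstruction φ κ α v) p) :
    ‖(⟨_, hu⟩ : lp (fun _ : Λ => ℝ) p) - ⟨_, hv⟩‖ ≤ L * ‖u - v‖ :=
  lp.norm_le_mul_norm_of_forall_norm_apply_le hp hL fun l =>
    abs_filterReconstruction_sub_le hκ hlip u v l

theorem norm_filterReconstruction_le (hφ : IsRegFilter φ) (hα : 0 < α) (hp : p ≠ 0)
    (hκ : ∀ l, 0 < κ l) {z c : lp (fun _ : Λ => ℝ) p} (hz : ∀ l, z l = κ l * c l)
    (h : Memℓp (filterReconstruction φ κ α z) p) : ‖(⟨_, h⟩ : lp (fun _ : Λ => ℝ) p)‖ ≤ ‖c‖ :=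
  lp.norm_mono hp fun l => by
    change |φ α (κ l) (z l) / κ l| ≤ |c l|
    rw [abs_div, abs_of_pos (hκ l), div_le_iff₀' (hκ l)]
    calc |φ α (κ l) (z l)| ≤ |z l| := hφ.abs_apply_le hα (hκ l) _
      _ = κ l * |c l| := by rw [hz l, abs_mul, abs_of_pos (hκ l)]

theorem tendsto_inner_filterReconstruction (hφ : IsRegFilter φ) (hκ : ∀ l, 0 < κ l)
    {z c : lp (fun _ : Λ => ℝ) 2} (hz : ∀ l, z l = κ l * c l) {β : Type*} {F : Filter β}
    {zk : β → lp (fun _ : Λ => ℝ) 2} (hzk : Tendsto zk F (𝓝 z)) {αs : β → ℝ}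
    (hαs : Tendsto αs F (𝓝[>] 0)) (hmem : ∀ k, Memℓp (filterReconstruction φ κ (αs k) (zk k)) 2)
    {C : ℝ} (hC : ∀ k, ‖(⟨_, hmem k⟩ : lp (fun _ : Λ => ℝ) 2)‖ ≤ C) (w : lp (fun _ : Λ => ℝ) 2) :
    Tendsto (fun k => ⟪(⟨_, hmem k⟩ : lp (fun _ : Λ => ℝ) 2), w⟫) F (𝓝 ⟪c, w⟫) := by
  refine lp.tendsto_inner_of_norm_le_of_tendsto_apply hC (fun l => ?_) w
  have hzkl : Tendsto (fun k => zk k l) F (𝓝 (κ l * c l)) :=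
    hz l ▸ ((lp.lipschitzWith_one_eval 2 l).continuous.tendsto z).comp hzk
  simpa [filterReconstruction, mul_div_cancel_left₀ _ (hκ l).ne'] using
    (hφ.tendsto_apply (hκ l) hαs hzkl).div_const (κ l)

theorem norm_filterReconstruction_le_add [Fact (1 ≤ p)] (hφ : IsRegFilter φ) (hα : 0 < α)
    (hκ : ∀ l, 0 < κ l) (hlip : ∀ l x y, |φ α (κ l) x - φ α (κ l) y| ≤ κ l * (L * |x - y|))
    (hL : 0 ≤ L) {u z c : lp (fun _ : Λ => ℝ) p} (hz : ∀ l, z l = κ l * c l)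
    (hu : Memℓp (filterReconstruction φ κ α u) p) :
    ‖(⟨_, hu⟩ : lp (fun _ : Λ => ℝ) p)‖ ≤ L * ‖u - z‖ + ‖c‖ := by
  have hp : p ≠ 0 := (zero_lt_one.trans_le (Fact.out : 1 ≤ p)).ne'
  have hz' : Memℓp (filterReconstruction φ κ α z) p :=
    memℓp_filterReconstruction hκ (fun l => hφ.2.2.1 α hα (κ l) (hκ l)) hlip z.2
  exact (norm_le_norm_sub_add _ (⟨_, hz'⟩ : lp (fun _ : Λ => ℝ) p)).trans (add_le_add
    (norm_filterReconstruction_sub_le hp hκ hlip hL u z hu hz')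
    (norm_filterReconstruction_le hφ hα hp hκ hz hz'))

end Reconstruction

theorem statement13_general {Λ : Type*}
    (κ : Λ → ℝ) (hκ : ∀ l, 0 < κ l) (hκbd : BddAbove (Set.range fun l => κ l ^ 2))
    (φ : ℝ → ℝ → ℝ → ℝ) (hfilter : IsRegFilter φ)
    (γ : ℝ) (hγ0 : 0 < γ)
    (ℓ : ℝ → ℝ) (hℓ : ∀ α > (0 : ℝ), 0 < ℓ α ∧ ℓ α < 1)
    (hC1 : ∀ α > (0 : ℝ), ∀ l : Λ, ∀ x y : ℝ,
      |φ α (κ l) x - φ α (κ l) y| ≤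
        γ * κ l ^ 2 * ℓ α / (1 - ℓ α * (1 - γ * κ l ^ 2)) * |x - y|) :
    ∃ hmem : ∀ α : ℝ, 0 < α → ∀ z : lp (fun _ : Λ => ℝ) 2,
        Memℓp (fun l => φ α (κ l) (z l) / κ l) 2,
      -- Stability
      (∀ (α : ℝ) (hα : 0 < α) (z : lp (fun _ : Λ => ℝ) 2) (zk : ℕ → lp (fun _ : Λ => ℝ) 2),
        Tendsto (fun k => ‖zk k - z‖) atTop (nhds 0) →
        Tendsto
          (fun k =>
            ‖(⟨fun l => φ α (κ l) (zk k l) / κ l, hmem α hα (zk k)⟩ : lp (fun _ : Λ => ℝ) 2) -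
              (⟨fun l => φ α (κ l) (z l) / κ l, hmem α hα z⟩ : lp (fun _ : Λ => ℝ) 2)‖)
          atTop (nhds 0)) ∧
      -- Convergence
      (∀ (z cplus : lp (fun _ : Λ => ℝ) 2), (∀ l, z l = κ l * cplus l) →
        (∀ α > (0 : ℝ), ∃ w : lp (fun _ : Λ => ℝ) 2, ∀ l, φ α (κ l) (w l) = z l) →
        ∀ (zk : ℕ → lp (fun _ : Λ => ℝ) 2) (δ αs : ℕ → ℝ) (hαpos : ∀ k, 0 < αs k),
          (∀ k, ‖zk k - z‖ ≤ δ k) →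
          Tendsto δ atTop (nhds 0) → Tendsto αs atTop (nhds 0) →
          (∃ c > (0 : ℝ), ∀ k, c * δ k ≤ (1 - ℓ (αs k)) / ℓ (αs k)) →
          ∀ w : lp (fun _ : Λ => ℝ) 2,
            Tendsto
              (fun k =>
                ⟪(⟨fun l => φ (αs k) (κ l) (zk k l) / κ l, hmem (αs k) (hαpos k) (zk k)⟩ :
                  lp (fun _ : Λ => ℝ) 2), w⟫)
              atTop (nhds ⟪cplus, w⟫)) := by
  obtain ⟨B, hB⟩ := hκbd
  have hκB : ∀ l, κ l ≤ √B := fun l => (le_abs_self _).trans (Real.abs_le_sqrt (hB ⟨l, rfl⟩))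
  set M : ℝ → ℝ := fun α => γ * √B * ℓ α / (1 - ℓ α)
  have hM : ∀ α > (0 : ℝ), 0 ≤ M α := fun α hα =>
    div_nonneg (by have := (hℓ α hα).1; positivity) (sub_nonneg.2 (hℓ α hα).2.le)
  have hlip : ∀ α > (0 : ℝ), ∀ l x y, |φ α (κ l) x - φ α (κ l) y| ≤ κ l * (M α * |x - y|) :=
    fun α hα l => abs_sub_le_of_assumptionC1 hγ0.le (hℓ α hα).1.le (hℓ α hα).2 (hκ l).le (hκB l)
      (hC1 α hα l)
  have hmem : ∀ α : ℝ, 0 < α → ∀ z : lp (fun _ : Λ => ℝ) 2,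
      Memℓp (fun l => φ α (κ l) (z l) / κ l) 2 := fun α hα z =>
    memℓp_filterReconstruction hκ (fun l => hfilter.2.2.1 α hα (κ l) (hκ l)) (hlip α hα) z.2
  refine ⟨hmem, fun α hα z zk hzk => ?_,
    fun z cplus hz _ zk δ αs hαpos hδ hδ0 hαs ⟨c, hc, hcδ⟩ w => ?_⟩
  · refine squeeze_zero (fun _ => norm_nonneg _)
      (fun k => norm_filterReconstruction_sub_le two_ne_zero hκ (hlip α hα) (hM α hα) _ _ _ _) ?_
    simpa using hzk.const_mul (M α)
  · have hzk : Tendsto zk atTop (𝓝 z) :=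
      tendsto_iff_norm_sub_tendsto_zero.2 (squeeze_zero (fun _ => norm_nonneg _) hδ hδ0)
    have hαs' : Tendsto αs atTop (𝓝[>] 0) :=
      tendsto_nhdsWithin_iff.2 ⟨hαs, Eventually.of_forall hαpos⟩
    refine tendsto_inner_filterReconstruction hfilter hκ hz hzk hαs' _
      (C := γ * √B * c⁻¹ + ‖cplus‖) (fun k => ?_) w
    obtain ⟨hℓ0, hℓ1⟩ := hℓ (αs k) (hαpos k)
    refine (norm_filterReconstruction_le_add hfilter (hαpos k) hκ
      (hlip _ (hαpos k)) (hM _ (hαpos k)) hz _).trans (add_le_add_left ?_ _)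
    calc M (αs k) * ‖zk k - z‖ ≤ M (αs k) * δ k := mul_le_mul_of_nonneg_left (hδ k) (hM _ (hαpos k))
      _ = γ * √B * (ℓ (αs k) / (1 - ℓ (αs k)) * δ k) := by ring
      _ ≤ γ * √B * c⁻¹ := by
          gcongr
          exact div_one_sub_mul_le_inv hℓ0 hℓ1 hc (hcδ k)

/-- **PnP-type existence, stability and convergence under Assumption C.**
Under Assumption C: (Existence) the filtered coefficients always lie in `ℓ²(Λ)`;
(Stability) for fixed `α > 0` the reconstruction map is norm-to-norm continuous;
(Convergence) for exact data `z = (κ_λ c⁺_λ)_λ` in the range of every `Φ_{α,κ}`, noisy data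
`‖z^k − z‖ ≤ δ_k → 0` and parameters `α_k → 0` with `(1 − ℓ_{α_k})/ℓ_{α_k} ≥ c·δ_k`, the
reconstructions converge weakly to `c⁺`. -/
theorem statement13 {Λ : Type*} [Countable Λ] [Nonempty Λ]
    (κ : Λ → ℝ) (hκ : ∀ l, 0 < κ l) (hκbd : BddAbove (Set.range fun l => κ l ^ 2))
    (φ : ℝ → ℝ → ℝ → ℝ) (hfilter : IsRegFilter φ)
    (γ : ℝ) (hγ0 : 0 < γ) (hγ1 : γ < 1 / sSup (Set.range fun l => κ l ^ 2))
    (ℓ : ℝ → ℝ) (hℓ : ∀ α > (0 : ℝ), 0 < ℓ α ∧ ℓ α < 1)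
    (hC1 : ∀ α > (0 : ℝ), ∀ l : Λ, ∀ x y : ℝ,
      |φ α (κ l) x - φ α (κ l) y| ≤
        γ * κ l ^ 2 * ℓ α / (1 - ℓ α * (1 - γ * κ l ^ 2)) * |x - y|)
    (hC2 : ∃ C : ℝ, 1 ≤ C ∧ ∀ l : Λ, ∀ α > (0 : ℝ), C ≤ 1 / (1 - ℓ α) →
      ∀ x : ℝ, γ * κ l ^ 2 * (1 - C * (1 - ℓ α)) /
          (1 - (1 - C * (1 - ℓ α)) * (1 - γ * κ l ^ 2)) * |x| ≤ |φ α (κ l) x|) :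
    ∃ hmem : ∀ α : ℝ, 0 < α → ∀ z : lp (fun _ : Λ => ℝ) 2,
        Memℓp (fun l => φ α (κ l) (z l) / κ l) 2,
      -- Stability
      (∀ (α : ℝ) (hα : 0 < α) (z : lp (fun _ : Λ => ℝ) 2) (zk : ℕ → lp (fun _ : Λ => ℝ) 2),
        Tendsto (fun k => ‖zk k - z‖) atTop (nhds 0) →
        Tendsto
          (fun k =>
            ‖(⟨fun l => φ α (κ l) (zk k l) / κ l, hmem α hα (zk k)⟩ : lp (fun _ : Λ => ℝ) 2) -
              (⟨fun l => φ α (κ l) (z l) / κ l, hmem α hα z⟩ : lp (fun _ : Λ => ℝ) 2)‖)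
          atTop (nhds 0)) ∧
      -- Convergence
      (∀ (z cplus : lp (fun _ : Λ => ℝ) 2), (∀ l, z l = κ l * cplus l) →
        (∀ α > (0 : ℝ), ∃ w : lp (fun _ : Λ => ℝ) 2, ∀ l, φ α (κ l) (w l) = z l) →
        ∀ (zk : ℕ → lp (fun _ : Λ => ℝ) 2) (δ αs : ℕ → ℝ) (hαpos : ∀ k, 0 < αs k),
          (∀ k, ‖zk k - z‖ ≤ δ k) →
          Tendsto δ atTop (nhds 0) → Tendsto αs atTop (nhds 0) →
          (∃ c > (0 : ℝ), ∀ k, c * δ k ≤ (1 - ℓ (αs k)) / ℓ (αs k)) →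
          ∀ w : lp (fun _ : Λ => ℝ) 2,
            Tendsto
              (fun k =>
                ⟪(⟨fun l => φ (αs k) (κ l) (zk k l) / κ l, hmem (αs k) (hαpos k) (zk k)⟩ :
                  lp (fun _ : Λ => ℝ) 2), w⟫)
              atTop (nhds ⟪cplus, w⟫)) :=
  statement13_general κ hκ hκbd φ hfilter γ hγ0 ℓ hℓ hC1
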